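/- Cramér's conjecture (there exists C > 0 such that p_{n+1} - p_n ≤ C(log p_n)² for all n ≥ 1) holds if and only if the map sending 1/n to 1/p_n is Lipschitz, i.e., there exists a constant L such that |1/p_n - 1/p_m| ≤ L·|1/n - 1/m| for all m, n ≥ 1. -/

import Mathlib

/-!
Both conditions are statements about consecutive indices:
`1/p_n - 1/p_{n+1} = (p_{n+1} - p_n) / (p_n p_{n+1})` and `1/n - 1/(n+1) = 1/(n(n+1))`.
Chebyshev's bounds `p_n ≍ n log p_n` and Bertrand's postulate `p_{n+1} ≤ 2 p_n` give
`p_n p_{n+1} ≍ n (n+1) (log p_n)²`, so the Lipschitz inequality for `(n, n+1)` is equivalent,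
up to constants, to the gap bound `p_{n+1} - p_n ≪ (log p_n)²`. Since both `1/p_n` and `1/n`
decrease, the inequality for consecutive indices telescopes to arbitrary `m, n`.
-/

open Real Filter

/-- `p n` is the `n`-th prime, with `p 1 = 2`. -/
noncomputable def p (n : ℕ) : ℕ := Nat.nth Nat.Prime (n - 1)

open scoped Nat.Prime

theorem abs_sub_le_mul_abs_sub_of_sub_succ_le {f g : ℕ → ℝ} {L : ℝ} {k₀ : ℕ} (hL : 0 ≤ L)
    (hf : ∀ k ≥ k₀, f (k + 1) ≤ f k) (h : ∀ k ≥ k₀, f k - f (k + 1) ≤ L * (g k - g (k + 1)))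
    {m n : ℕ} (hm : k₀ ≤ m) (hn : k₀ ≤ n) : |f n - f m| ≤ L * |g n - g m| := by
  wlog hmn : m ≤ n generalizing m n
  · rw [abs_sub_comm, abs_sub_comm (g n)]
    exact this hn hm (by omega)
  have hf_anti : AntitoneOn f (Set.Ici k₀) := antitoneOn_nat_Ici_of_succ_le hf
  have h_mono : MonotoneOn (fun k ↦ f k - L * g k) (Set.Ici k₀) :=
    monotoneOn_nat_Ici_of_le_succ fun k hk ↦ by linarith [h k hk]
  have h₁ := hf_anti hm hn hmn
  have h₂ := h_mono hm hn hmn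
  calc |f n - f m| = f m - f n := by rw [abs_of_nonpos (by linarith)]; ring
    _ ≤ L * (g m - g n) := by linarith
    _ ≤ L * |g n - g m| := by rw [abs_sub_comm]; gcongr; exact le_abs_self _

theorem primeCounting_mul_log_le (N : ℕ) : π N * log N ≤ 5 * N := by
  rcases le_or_gt N 1 with hN | hN
  · interval_cases N <;> simp
  have hN' : (1 : ℝ) < N := by exact_mod_cast hN
  have hlog : 0 < log N := log_pos hN'
  have hsqrt : log √N = log N / 2 := by rw [log_sqrt (by positivity)]
  have hπ := Chebyshev.pi_le_log4_mul_div hN'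
  rw [Nat.floor_natCast, hsqrt] at hπ
  -- `log N = 2 log √N ≤ 2 (√N - 1)`
  have hlog_le : log N ≤ 2 * √N := by
    have := log_le_sub_one_of_pos (sqrt_pos.2 (by positivity : (0 : ℝ) < N))
    linarith
  have hlog4 : log 4 < 1.4 := by
    rw [show (4 : ℝ) = 2 ^ 2 by norm_num, log_pow]; have := log_two_lt_d9; push_cast; linarith
  have hss : √N * √N = N := mul_self_sqrt (by positivity)
  calc (π N : ℝ) * log N ≤ (log 4 * N / (log N / 2) + √N) * log N := by gcongr
    _ = 2 * log 4 * N + √N * log N := by field_simp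
    _ ≤ 5 * N := by nlinarith [sqrt_nonneg (N : ℝ)]

theorem le_primeCounting_mul_log {N : ℕ} (hN : 2 ≤ N) : (N : ℝ) ≤ 5 * π N * log N := by
  have hN' : (1 : ℝ) < N := by exact_mod_cast hN
  have hlog : 0 < log N := log_pos hN'
  have hπ := Chebyshev.pi_ge N
  rw [div_le_iff₀ hlog] at hπ
  have hπ1 : (1 : ℝ) ≤ π N := by exact_mod_cast Nat.monotone_primeCounting hN
  have hlog_succ : log (N + 1) ≤ 2 * log N := by
    rw [show 2 * log N = log ((N : ℝ) ^ 2) by rw [log_pow]; norm_num]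
    have h2N : (2 : ℝ) ≤ N := by exact_mod_cast hN
    gcongr; nlinarith
  have hlog2 := log_two_gt_d9
  nlinarith [mul_le_mul_of_nonneg_right hπ1 hlog.le]

theorem p_prime (n : ℕ) : (p n).Prime := Nat.prime_nth_prime _

theorem p_pos (n : ℕ) : 0 < p n := (p_prime n).pos

theorem log_p_pos (n : ℕ) : 0 < log (p n) := log_pos (by exact_mod_cast (p_prime n).one_lt)

theorem p_mono : Monotone p := fun _ _ h ↦
  (Nat.nth_monotone Nat.infinite_setOfPred_prime) (Nat.sub_le_sub_right h 1)

theorem primeCounting_p {n : ℕ} (hn : 1 ≤ n) : π (p n) = n := by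
  rw [Nat.primeCounting, Nat.primeCounting', Nat.count_succ, ← Nat.primeCounting',
    p, Nat.primeCounting'_nth_eq, if_pos (Nat.prime_nth_prime _)]
  omega

theorem nth_prime_succ_le_two_mul (k : ℕ) :
    Nat.nth Nat.Prime (k + 1) ≤ 2 * Nat.nth Nat.Prime k := by
  obtain ⟨q, hq, hlt, hle⟩ :=
    Nat.exists_prime_lt_and_le_two_mul _ (Nat.prime_nth_prime k).ne_zero
  calc Nat.nth Nat.Prime (k + 1) ≤ q := ?_
    _ ≤ _ := hle
  rw [← Nat.nth_count hq] at hlt ⊢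
  exact (Nat.nth_le_nth Nat.infinite_setOfPred_prime).2
    (Nat.succ_le_of_lt ((Nat.nth_lt_nth Nat.infinite_setOfPred_prime).1 hlt))

theorem p_succ_le_two_mul {n : ℕ} (hn : 1 ≤ n) : p (n + 1) ≤ 2 * p n := by
  obtain ⟨k, rfl⟩ := Nat.exists_eq_add_of_le' hn
  simpa [p] using nth_prime_succ_le_two_mul k

theorem natCast_mul_log_p_le {n : ℕ} (hn : 1 ≤ n) : n * log (p n) ≤ 5 * p n := by
  simpa [primeCounting_p hn] using primeCounting_mul_log_le (p n)

theorem p_le_mul_log_p {n : ℕ} (hn : 1 ≤ n) : (p n : ℝ) ≤ 5 * n * log (p n) := by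
  simpa [primeCounting_p hn] using le_primeCounting_mul_log (p_prime n).two_le

theorem mul_succ_mul_log_p_sq_le {n : ℕ} (hn : 1 ≤ n) :
    n * (n + 1) * log (p n) ^ 2 ≤ 25 * (p n * p (n + 1)) := by
  have h₁ := natCast_mul_log_p_le hn
  have h₂ : ((n + 1 : ℕ) : ℝ) * log (p (n + 1)) ≤ 5 * p (n + 1) := natCast_mul_log_p_le (by omega)
  have hlog : log (p n) ≤ log (p (n + 1)) :=
    log_le_log (by exact_mod_cast p_pos n) (by exact_mod_cast p_mono n.le_succ)
  push_cast at h₂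
  have h₃ : ((n : ℝ) + 1) * log (p n) ≤ 5 * p (n + 1) := by
    nlinarith [log_p_pos n]
  calc (n : ℝ) * (n + 1) * log (p n) ^ 2 = (n * log (p n)) * ((n + 1) * log (p n)) := by ring
    _ ≤ (5 * p n) * (5 * p (n + 1)) := by gcongr
    _ = 25 * (p n * p (n + 1)) := by ring

theorem p_mul_p_succ_le {n : ℕ} (hn : 1 ≤ n) :
    (p n : ℝ) * p (n + 1) ≤ 50 * (n * (n + 1)) * log (p n) ^ 2 := by
  have h₁ := p_le_mul_log_p hn
  have h₂ : (p (n + 1) : ℝ) ≤ 2 * p n := by exact_mod_cast p_succ_le_two_mul hn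
  have hp := p_pos n
  calc (p n : ℝ) * p (n + 1) ≤ 2 * (p n * p n) := by nlinarith
    _ ≤ 2 * ((5 * n * log (p n)) * (5 * n * log (p n))) := by gcongr
    _ = 50 * (n * n) * log (p n) ^ 2 := by ring
    _ ≤ 50 * (n * (n + 1)) * log (p n) ^ 2 := by gcongr; linarith

theorem one_div_sub_one_div_succ (n : ℕ) (hn : 1 ≤ n) :
    (1 : ℝ) / n - 1 / (n + 1 : ℕ) = 1 / (n * (n + 1)) := by
  have : (0 : ℝ) < n := by exact_mod_cast hn
  push_cast; field_simp; ring

theorem one_div_p_sub_one_div_p_succ_le {C : ℝ} (hC : 0 ≤ C) {n : ℕ} (hn : 1 ≤ n)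
    (hgap : (p (n + 1) : ℝ) - p n ≤ C * log (p n) ^ 2) :
    (1 : ℝ) / p n - 1 / p (n + 1) ≤ 25 * C * (1 / n - 1 / (n + 1 : ℕ)) := by
  have hp := p_pos n
  have hp' := p_pos (n + 1)
  have hn' : (0 : ℝ) < n := by exact_mod_cast hn
  rw [one_div_sub_one_div_succ n hn]
  calc (1 : ℝ) / p n - 1 / p (n + 1) = ((p (n + 1) : ℝ) - p n) / (p n * p (n + 1)) := by
        field_simp
    _ ≤ C * log (p n) ^ 2 / (p n * p (n + 1)) := by gcongr
    _ ≤ 25 * C * (1 / (n * (n + 1))) := by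
      rw [mul_one_div, div_le_div_iff₀ (by positivity) (by positivity)]
      nlinarith [mul_succ_mul_log_p_sq_le hn]

theorem p_succ_sub_p_le {L : ℝ} (hL : 0 ≤ L) {n : ℕ} (hn : 1 ≤ n)
    (h : |(1 : ℝ) / p n - 1 / p (n + 1)| ≤ L * |(1 : ℝ) / n - 1 / (n + 1 : ℕ)|) :
    (p (n + 1) : ℝ) - p n ≤ 50 * L * log (p n) ^ 2 := by
  have hp := p_pos n
  have hp' := p_pos (n + 1)
  have hn' : (0 : ℝ) < n := by exact_mod_cast hn
  rw [one_div_sub_one_div_succ n hn, abs_of_pos (a := 1 / ((n : ℝ) * (n + 1))) (by positivity)]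
    at h
  calc (p (n + 1) : ℝ) - p n = (1 / p n - 1 / p (n + 1)) * (p n * p (n + 1)) := by
        field_simp
    _ ≤ L * (1 / (n * (n + 1))) * (50 * (n * (n + 1)) * log (p n) ^ 2) :=
      mul_le_mul ((le_abs_self _).trans h) (p_mul_p_succ_le hn) (by positivity) (by positivity)
    _ = 50 * L * log (p n) ^ 2 := by field_simp

theorem stmt_9 :
    (∃ C : ℝ, 0 < C ∧ ∀ n : ℕ, 1 ≤ n →
        (p (n + 1) : ℝ) - p n ≤ C * (Real.log (p n)) ^ 2) ↔
    (∃ L : ℝ, ∀ m n : ℕ, 1 ≤ m → 1 ≤ n →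
        |(1 : ℝ) / p n - 1 / p m| ≤ L * |(1 : ℝ) / n - 1 / m|) := by
  constructor
  · rintro ⟨C, hC, hgap⟩
    refine ⟨25 * C, fun m n hm hn ↦ ?_⟩
    refine abs_sub_le_mul_abs_sub_of_sub_succ_le (f := fun k ↦ 1 / (p k : ℝ))
      (g := fun k ↦ 1 / (k : ℝ)) (by positivity) (fun k _ ↦ ?_)
      (fun k hk ↦ one_div_p_sub_one_div_p_succ_le hC.le hk (hgap k hk)) hm hn
    exact one_div_le_one_div_of_le (by exact_mod_cast p_pos k)
      (by exact_mod_cast p_mono k.le_succ)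
  · rintro ⟨L, hL⟩
    have hL₀ : 0 ≤ L := by
      have h := (abs_nonneg _).trans (hL 1 2 le_rfl one_le_two)
      norm_num at h
      exact h
    exact ⟨50 * L + 1, by positivity, fun n hn ↦ (p_succ_sub_p_le hL₀ hn (hL (n + 1) n
      (by omega) hn)).trans (by gcongr; linarith)⟩
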